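/- arXiv:2402.12724 — 2 statements merged into one kernel-verified Lean document; each statement's English description precedes it below -/
import Mathlib

section
/- Fix p ≥ 1, λ ≥ 0, γ ≥ 0, a symmetric matrix C ∈ ℝ^{2p×2p} that is S-swap invariant for every S ⊆ {1,...,p} (i.e., Π_SᵀC Π_S = C for every such S, where Π_S swaps coordinates j and j+p for all j ∈ S), and a vector d ∈ ℝ^{2p}. Suppose β̂(d) is a global minimizer of f_d(β) = ½·βᵀCβ − dᵀβ + λ‖β‖₁ + γ‖β‖₂², and define for each j ∈ {1,...,p} the statistic W_j(d) = |β̂(d)_j| − |β̂(d)_{j+p}|. Then the statistics satisfy the flip-sign property: for every S ⊆ {1,...,p}, choosing the minimizer β̂(Π_S d) = Π_S β̂(d) for the swapped data yields W_j(Π_S d) = −W_j(d) for all j ∈ S and W_j(Π_S d) = W_j(d) for all j ∉ S. -/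
open Matrix

/-- The coordinate permutation on `ℝ^{2p}` (indexed by `Fin p ⊕ Fin p`, where `Sum.inl j`
is coordinate `j` and `Sum.inr j` is coordinate `j + p`) that swaps the `j`-th and
`(j+p)`-th coordinates for every `j ∈ S` and fixes all other coordinates. -/
def swapFun {p : ℕ} (S : Finset (Fin p)) : (Fin p ⊕ Fin p) → (Fin p ⊕ Fin p)
  | Sum.inl j => if j ∈ S then Sum.inr j else Sum.inl j
  | Sum.inr j => if j ∈ S then Sum.inl j else Sum.inr j

/-- The objective `f_d(β) = ½ βᵀCβ − dᵀβ + λ‖β‖₁ + γ‖β‖₂²`. -/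
noncomputable def obj {p : ℕ} (C : Matrix (Fin p ⊕ Fin p) (Fin p ⊕ Fin p) ℝ)
    (d : (Fin p ⊕ Fin p) → ℝ) (lam gam : ℝ) (β : (Fin p ⊕ Fin p) → ℝ) : ℝ :=
  (1 / 2) * (β ⬝ᵥ C *ᵥ β) - d ⬝ᵥ β + lam * (∑ i, |β i|) + gam * (∑ i, (β i) ^ 2)

/-- The coefficient-difference statistic `W_j = |β_j| − |β_{j+p}|`. -/
def Wstat {p : ℕ} (β : (Fin p ⊕ Fin p) → ℝ) (j : Fin p) : ℝ :=
  |β (Sum.inl j)| - |β (Sum.inr j)|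

/-! Permuting the coordinates of both the data `d` and the argument `β` by a permutation `e`
that leaves `C` invariant leaves every term of `f_d(β)` unchanged. Since `Π_S` is an involution
preserving `C`, it maps the minimizers of `f_d` onto those of `f_{Π_S d}`, and it exchanges
`|β_j|` with `|β_{j+p}|` exactly for `j ∈ S`. -/

theorem swapFun_involutive {p : ℕ} (S : Finset (Fin p)) : Function.Involutive (swapFun S) := by
  rintro (j | j) <;> by_cases hj : j ∈ S <;> simp [swapFun, hj]

theorem obj_comp_perm {p : ℕ} (C : Matrix (Fin p ⊕ Fin p) (Fin p ⊕ Fin p) ℝ)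
    (e : Equiv.Perm (Fin p ⊕ Fin p)) (hCe : C.submatrix e e = C)
    (d : (Fin p ⊕ Fin p) → ℝ) (lam gam : ℝ) (β : (Fin p ⊕ Fin p) → ℝ) :
    obj C (d ∘ e) lam gam (β ∘ e) = obj C d lam gam β := by
  have hquad : (β ∘ e) ⬝ᵥ C *ᵥ (β ∘ e) = β ⬝ᵥ C *ᵥ β := by
    conv_lhs => rw [← hCe, submatrix_mulVec_equiv]
    simp [Function.comp_assoc, comp_equiv_dotProduct_comp_equiv]
  simp only [obj, hquad, comp_equiv_dotProduct_comp_equiv, Function.comp_apply,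
    Equiv.sum_comp e (fun i => |β i|), Equiv.sum_comp e (fun i => β i ^ 2)]

theorem Wstat_comp_swapFun_of_mem {p : ℕ} {S : Finset (Fin p)} {j : Fin p} (hj : j ∈ S)
    (β : (Fin p ⊕ Fin p) → ℝ) : Wstat (β ∘ swapFun S) j = -Wstat β j := by
  simp [Wstat, swapFun, hj]

theorem Wstat_comp_swapFun_of_notMem {p : ℕ} {S : Finset (Fin p)} {j : Fin p} (hj : j ∉ S)
    (β : (Fin p ⊕ Fin p) → ℝ) : Wstat (β ∘ swapFun S) j = Wstat β j := by
  simp [Wstat, swapFun, hj]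

theorem stmt_3_general (p : ℕ) (lam gam : ℝ)
    (C : Matrix (Fin p ⊕ Fin p) (Fin p ⊕ Fin p) ℝ)
    (hswap : ∀ S : Finset (Fin p), C.submatrix (swapFun S) (swapFun S) = C)
    (d : (Fin p ⊕ Fin p) → ℝ) (βhat : (Fin p ⊕ Fin p) → ℝ)
    (hmin : ∀ β, obj C d lam gam βhat ≤ obj C d lam gam β) (S : Finset (Fin p)) :
    (∀ β, obj C (d ∘ swapFun S) lam gam (βhat ∘ swapFun S)
        ≤ obj C (d ∘ swapFun S) lam gam β)
    ∧ (∀ j ∈ S, Wstat (βhat ∘ swapFun S) j = -(Wstat βhat j))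
    ∧ (∀ j ∉ S, Wstat (βhat ∘ swapFun S) j = Wstat βhat j) := by
  set e := (swapFun_involutive S).toPerm
  have hobj := obj_comp_perm C e (hswap S) d lam gam
  refine ⟨fun β => ?_, fun j hj => Wstat_comp_swapFun_of_mem hj βhat,
    fun j hj => Wstat_comp_swapFun_of_notMem hj βhat⟩
  have hβ : (β ∘ e) ∘ e = β := funext fun i => congrArg β (swapFun_involutive S i)
  calc obj C (d ∘ e) lam gam (βhat ∘ e) = obj C d lam gam βhat := hobj βhat
    _ ≤ obj C d lam gam (β ∘ e) := hmin _
    _ = obj C (d ∘ e) lam gam β := by rw [← hobj (β ∘ e), hβ]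

/-- **Flip-sign property of the pseudo-lasso statistics.** If `C` is symmetric and
`S`-swap invariant for every `S`, and `β̂` is a global minimizer of `f_d`, then for every
`S ⊆ {1,…,p}`, `Π_S β̂` is a global minimizer of `f_{Π_S d}`, and the statistics computed
from this minimizer satisfy `W_j(Π_S d) = −W_j(d)` for `j ∈ S` and `W_j(Π_S d) = W_j(d)`
for `j ∉ S`. -/
theorem stmt_3 (p : ℕ) (hp : 1 ≤ p) (lam gam : ℝ) (hlam : 0 ≤ lam) (hgam : 0 ≤ gam)
    (C : Matrix (Fin p ⊕ Fin p) (Fin p ⊕ Fin p) ℝ) (hC : C.IsSymm)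
    (hswap : ∀ S : Finset (Fin p), C.submatrix (swapFun S) (swapFun S) = C)
    (d : (Fin p ⊕ Fin p) → ℝ) (βhat : (Fin p ⊕ Fin p) → ℝ)
    (hmin : ∀ β, obj C d lam gam βhat ≤ obj C d lam gam β) (S : Finset (Fin p)) :
    (∀ β, obj C (d ∘ swapFun S) lam gam (βhat ∘ swapFun S)
        ≤ obj C (d ∘ swapFun S) lam gam β)
    ∧ (∀ j ∈ S, Wstat (βhat ∘ swapFun S) j = -(Wstat βhat j))
    ∧ (∀ j ∉ S, Wstat (βhat ∘ swapFun S) j = Wstat βhat j) :=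
  stmt_3_general p lam gam C hswap d βhat hmin S
end

section
/- Let n, p ≥ 1, let X ∈ ℝ^{n×p} and Y ∈ ℝⁿ be fixed, let P ∈ ℝ^{p×p} be any matrix and V ∈ ℝ^{p×p} be any symmetric positive semidefinite matrix. Let E be an n × p random matrix with i.i.d. standard Gaussian entries and let Z ∼ N(0, V) be a Gaussian vector in ℝ^p. Define X̃ = X P + E V^{1/2}, where V^{1/2} is the symmetric positive semidefinite square root of V. Then the random vector X̃ᵀY has the same distribution as PᵀXᵀY + ‖Y‖₂ Z. -/
/-!
Since `V^{1/2}` is symmetric, `X̃ᵀY = PᵀXᵀY + V^{1/2} (EᵀY)`, while `Z` is `V^{1/2}` applied to a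
standard Gaussian vector; so it suffices that `EᵀY` is distributed as `‖Y‖₂` times a standard
Gaussian vector. The columns of `E` are independent, hence so are the coordinates of `EᵀY`, and
each of them, a linear combination of independent standard Gaussians, is `N(0, ‖Y‖₂²)`: its
characteristic function is the product of the Gaussian ones.
-/

open Matrix MeasureTheory ProbabilityTheory
open scoped NNReal

open scoped ComplexOrder in
/-- The symmetric PSD square root of a positive semidefinite matrix, as defined in the older
Mathlib (`Matrix.PosSemidef.sqrt`, removed since). -/
noncomputable def Matrix.PosSemidef.sqrt {𝕜 : Type*} [RCLike 𝕜] {n : Type*} [Fintype n]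
    [DecidableEq n] {A : Matrix n n 𝕜} (hA : A.PosSemidef) : Matrix n n 𝕜 :=
  (hA.1.eigenvectorUnitary : Matrix n n 𝕜) * diagonal ((↑) ∘ (√·) ∘ hA.1.eigenvalues) *
    (star (hA.1.eigenvectorUnitary : Matrix n n 𝕜))

/-- The standard Gaussian measure `N(0, I)` on `ι → ℝ`. -/
noncomputable def stdGaussian (ι : Type*) [Fintype ι] : Measure (ι → ℝ) :=
  Measure.pi fun _ : ι => gaussianReal 0 1

/-- The centered Gaussian measure `N(0, V)` on `ι → ℝ` with covariance the symmetric
positive semidefinite matrix `V`, realized as the pushforward of the standard Gaussian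
under multiplication by the symmetric PSD square root `V^{1/2}`. -/
noncomputable def gaussianVec {ι : Type*} [Fintype ι] [DecidableEq ι]
    {V : Matrix ι ι ℝ} (hV : V.PosSemidef) : Measure (ι → ℝ) :=
  (stdGaussian ι).map fun z => hV.sqrt *ᵥ z

open scoped ComplexOrder in
lemma Matrix.PosSemidef.isHermitian_sqrt {𝕜 : Type*} [RCLike 𝕜] {n : Type*} [Fintype n]
    [DecidableEq n] {A : Matrix n n 𝕜} (hA : A.PosSemidef) : hA.sqrt.IsHermitian :=
  isHermitian_mul_mul_conjTranspose _ <| isHermitian_diagonal_iff.mpr fun _ =>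
    RCLike.conj_ofReal _

lemma map_sum_pi_gaussianReal {ι : Type*} [Fintype ι] (m : ι → ℝ) (v : ι → ℝ≥0) :
    (Measure.pi fun i => gaussianReal (m i) (v i)).map (fun x => ∑ i, x i)
      = gaussianReal (∑ i, m i) (∑ i, v i) := by
  refine Measure.ext_of_charFun (funext fun t => ?_)
  simp only [charFun_map_sum_pi_eq_prod, Finset.prod_apply, charFun_gaussianReal,
    ← Complex.exp_sum]
  push_cast
  simp only [Finset.mul_sum, Finset.sum_mul, Finset.sum_div, Finset.sum_sub_distrib]

lemma map_pi_gaussianReal_dotProduct {ι : Type*} [Fintype ι] (y : ι → ℝ) :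
    (Measure.pi fun _ : ι => gaussianReal 0 1).map (y ⬝ᵥ ·)
      = gaussianReal 0 (∑ i, .mk (y i ^ 2) (sq_nonneg _)) := by
  have hmul : (Measure.pi fun _ : ι => gaussianReal 0 1).map (fun w i => y i * w i)
      = Measure.pi fun i => gaussianReal 0 (.mk (y i ^ 2) (sq_nonneg _)) := by
    rw [Measure.pi_map_pi fun i => (measurable_const_mul (y i)).aemeasurable]
    simp_rw [gaussianReal_map_const_mul, mul_zero, mul_one]
  have hsum := map_sum_pi_gaussianReal (fun _ : ι => (0 : ℝ)) fun i => .mk (y i ^ 2) (sq_nonneg _)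
  rwa [← hmul, Finset.sum_const_zero, Measure.map_map (by fun_prop) (by fun_prop)] at hsum

lemma map_pi_gaussianReal_rowwise_dotProduct {κ ι : Type*} [Fintype κ] [Fintype ι] (y : ι → ℝ) :
    (Measure.pi fun _ : κ × ι => gaussianReal 0 1).map (fun w k => y ⬝ᵥ fun i => w (k, i))
      = (Measure.pi fun _ : κ => gaussianReal 0 1).map (√(∑ i, y i ^ 2) • ·) := by
  have hcurry : (Measure.pi fun _ : κ × ι => gaussianReal 0 1).map (MeasurableEquiv.curry κ ι ℝ)
      = Measure.pi fun _ : κ => Measure.pi fun _ : ι => gaussianReal 0 1 := by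
    simpa only [Measure.infinitePi_eq_pi] using
      Measure.infinitePi_map_curry fun (_ : κ) (_ : ι) => gaussianReal 0 1
  have hvar : .mk (√(∑ i, y i ^ 2) ^ 2) (sq_nonneg _) * 1
      = ∑ i, (.mk (y i ^ 2) (sq_nonneg _) : ℝ≥0) := by
    ext
    simp [Real.sq_sqrt (Finset.sum_nonneg fun i _ => sq_nonneg (y i))]
  calc (Measure.pi fun _ : κ × ι => gaussianReal 0 1).map (fun w k => y ⬝ᵥ fun i => w (k, i))
      = ((Measure.pi fun _ : κ × ι => gaussianReal 0 1).map (MeasurableEquiv.curry κ ι ℝ)).map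
          (fun u k => y ⬝ᵥ u k) := by
        rw [Measure.map_map (by fun_prop) (MeasurableEquiv.measurable _)]; rfl
    _ = Measure.pi fun _ : κ => gaussianReal 0 (∑ i, .mk (y i ^ 2) (sq_nonneg _)) := by
        rw [hcurry, Measure.pi_map_pi (f := fun (_ : κ) (w : ι → ℝ) => y ⬝ᵥ w)
          fun _ => (by fun_prop : Measurable _).aemeasurable]
        simp_rw [map_pi_gaussianReal_dotProduct]
    _ = (Measure.pi fun _ : κ => gaussianReal 0 1).map (√(∑ i, y i ^ 2) • ·) := by
        change _ = Measure.map (fun (z : κ → ℝ) k => √(∑ i, y i ^ 2) * z k) _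
        rw [Measure.pi_map_pi fun _ => (measurable_const_mul _).aemeasurable]
        simp_rw [gaussianReal_map_const_mul, mul_zero, hvar]

theorem stmt_6_general (n p : ℕ)
    (X : Matrix (Fin n) (Fin p) ℝ) (Y : Fin n → ℝ)
    (P : Matrix (Fin p) (Fin p) ℝ) (V : Matrix (Fin p) (Fin p) ℝ) (hV : V.PosSemidef)
    {Ω : Type*} [MeasurableSpace Ω] (μ : Measure Ω)
    (E : Ω → Fin n → Fin p → ℝ) (hE : Measurable E)
    (hiid : iIndepFun
      (fun (ij : Fin n × Fin p) ω => E ω ij.1 ij.2) μ)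
    (hElaw : ∀ i j, Measure.map (fun ω => E ω i j) μ = gaussianReal 0 1)
    (Z : Ω → Fin p → ℝ) (hZ : Measurable Z)
    (hZlaw : Measure.map Z μ = gaussianVec hV) :
    Measure.map (fun ω => (X * P + Matrix.of (E ω) * hV.sqrt)ᵀ *ᵥ Y) μ
      = Measure.map (fun ω => Pᵀ *ᵥ (Xᵀ *ᵥ Y) + Real.sqrt (∑ i, (Y i) ^ 2) • Z ω) μ := by
  set S := hV.sqrt
  set a := Pᵀ *ᵥ (Xᵀ *ᵥ Y)
  set c := √(∑ i, Y i ^ 2)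
  have hS : Sᵀ = S := (isHermitian_iff_isSymm.mp hV.isHermitian_sqrt).eq
  have hcols : μ.map (fun ω (q : Fin p × Fin n) => E ω q.2 q.1)
      = Measure.pi fun _ => gaussianReal 0 1 := by
    simpa only [Prod.fst_swap, Prod.snd_swap, hElaw] using
      (hiid.precomp Prod.swap_injective).map_fun_eq_pi_map fun _ => by fun_prop
  have hlhs : (fun ω => (X * P + Matrix.of (E ω) * S)ᵀ *ᵥ Y)
      = (fun z => a + S *ᵥ z) ∘ (fun w k => Y ⬝ᵥ fun i => w (k, i))
          ∘ (fun ω (q : Fin p × Fin n) => E ω q.2 q.1) := by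
    funext ω
    rw [mulVec_transpose, vecMul_add, ← vecMul_vecMul, ← vecMul_vecMul, ← mulVec_transpose P,
      ← mulVec_transpose X, ← mulVec_transpose S, hS]
    rfl
  have hrhs : (fun ω => a + c • Z ω) = (fun z => a + c • z) ∘ Z := rfl
  rw [hlhs, hrhs, ← Measure.map_map (by fun_prop) (by fun_prop),
    ← Measure.map_map (by fun_prop) (by fun_prop), hcols, map_pi_gaussianReal_rowwise_dotProduct,
    ← Measure.map_map (by fun_prop) hZ, hZlaw, gaussianVec,
    Measure.map_map (by fun_prop) (by fun_prop), Measure.map_map (by fun_prop) (by fun_prop)]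
  congr 1
  funext z
  exact congrArg (a + ·) (mulVec_smul S c z)

/-- If `E` is an `n × p` random matrix with i.i.d. standard Gaussian entries,
`Z ∼ N(0, V)`, and `X̃ = X P + E V^{1/2}`, then `X̃ᵀ Y` has the same distribution as
`Pᵀ Xᵀ Y + ‖Y‖₂ Z`. -/
theorem stmt_6 (n p : ℕ) (hn : 1 ≤ n) (hp : 1 ≤ p)
    (X : Matrix (Fin n) (Fin p) ℝ) (Y : Fin n → ℝ)
    (P : Matrix (Fin p) (Fin p) ℝ) (V : Matrix (Fin p) (Fin p) ℝ) (hV : V.PosSemidef)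
    {Ω : Type*} [MeasurableSpace Ω] (μ : Measure Ω) [IsProbabilityMeasure μ]
    (E : Ω → Fin n → Fin p → ℝ) (hE : Measurable E)
    (hiid : iIndepFun
      (fun (ij : Fin n × Fin p) ω => E ω ij.1 ij.2) μ)
    (hElaw : ∀ i j, Measure.map (fun ω => E ω i j) μ = gaussianReal 0 1)
    (Z : Ω → Fin p → ℝ) (hZ : Measurable Z)
    (hZlaw : Measure.map Z μ = gaussianVec hV) :
    Measure.map (fun ω => (X * P + Matrix.of (E ω) * hV.sqrt)ᵀ *ᵥ Y) μ
      = Measure.map (fun ω => Pᵀ *ᵥ (Xᵀ *ᵥ Y) + Real.sqrt (∑ i, (Y i) ^ 2) • Z ω) μ :=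
  stmt_6_general n p X Y P V hV μ E hE hiid hElaw Z hZ hZlaw
end
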